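/- arXiv:math/0701097 — 2 statements merged into one kernel-verified Lean document; each statement's English description precedes it below -/
import Mathlib

section
/- Let n ≥ 2 and suppose the functions a_k : ℕ × ℕ → ℂ satisfy ∑_{i,j=1}^∞ |a_k(i,j)|² < ∞ for k = 1,…,n. Then |∑_{i₁,…,i_n=1}^∞ ∏_{k=1}^n a_k(i_k, i_{k+1})| ≤ ∏_{k=1}^n (∑_{i,j=1}^∞ |a_k(i,j)|²)^{1/2}, where indices are cyclic, i.e. i_{n+1} = i₁. -/
open scoped ENNReal NNReal
open MeasureTheory

lemma enn_cs {ι : Type*} [Countable ι] (f g : ι → ℝ≥0∞) :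
    ∑' x, f x * g x ≤ (∑' x, f x ^ 2) ^ (1/2 : ℝ) * (∑' x, g x ^ 2) ^ (1/2 : ℝ) := by
  letI : MeasurableSpace ι := ⊤
  haveI : MeasurableSingletonClass ι := ⟨fun a => trivial⟩
  have hf : AEMeasurable f (Measure.count : Measure ι) := (measurable_from_top).aemeasurable
  have hg : AEMeasurable g (Measure.count : Measure ι) := (measurable_from_top).aemeasurable
  have h := ENNReal.lintegral_mul_le_Lp_mul_Lq (Measure.count : Measure ι)
    (Real.HolderConjugate.two_two) hf hg
  simp only [Pi.mul_apply, lintegral_count] at h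
  have h2 : ∀ (u : ι → ℝ≥0∞) (x : ι), u x ^ (2:ℝ) = u x ^ 2 := by
    intro u x
    rw [← ENNReal.rpow_natCast (u x) 2]; norm_num
  calc ∑' x, f x * g x ≤ (∑' x, f x ^ (2:ℝ)) ^ (1/2 : ℝ) * (∑' x, g x ^ (2:ℝ)) ^ (1/2 : ℝ) := h
    _ = _ := by simp only [h2]

lemma enn_cs_sq {ι : Type*} [Countable ι] (f g : ι → ℝ≥0∞) :
    (∑' x, f x * g x) ^ 2 ≤ (∑' x, f x ^ 2) * (∑' x, g x ^ 2) := by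
  calc (∑' x, f x * g x) ^ 2
      ≤ ((∑' x, f x ^ 2) ^ (1/2 : ℝ) * (∑' x, g x ^ 2) ^ (1/2 : ℝ)) ^ 2 := by
        exact pow_le_pow_left' (enn_cs f g) 2
    _ = (∑' x, f x ^ 2) * (∑' x, g x ^ 2) := by
        rw [mul_pow, ← ENNReal.rpow_natCast ((∑' x, f x ^ 2) ^ (1/2 : ℝ)) 2,
          ← ENNReal.rpow_natCast ((∑' x, g x ^ 2) ^ (1/2 : ℝ)) 2,
          ← ENNReal.rpow_mul, ← ENNReal.rpow_mul]
        norm_num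

lemma enn_tsum_mul_prod (A B : ℕ → ℝ≥0∞) :
    ∑' p : ℕ × ℕ, A p.1 * B p.2 = (∑' x, A x) * (∑' y, B y) := by
  rw [ENNReal.tsum_prod (f := fun a b => A a * B b)]
  simp_rw [ENNReal.tsum_mul_left, ENNReal.tsum_mul_right]

noncomputable def chain : (n : ℕ) → (Fin (n+1) → ℕ → ℕ → ℝ≥0∞) → ℕ → ℕ → ℝ≥0∞
  | 0, f, x, y => f 0 x y
  | (n+1), f, x, y => ∑' z, f 0 x z * chain n (fun k => f k.succ) z y

lemma chain_sq_le (n : ℕ) (f : Fin (n+1) → ℕ → ℕ → ℝ≥0∞) :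
    ∑' p : ℕ × ℕ, chain n f p.1 p.2 ^ 2 ≤ ∏ k, ∑' p : ℕ × ℕ, f k p.1 p.2 ^ 2 := by
  induction n with
  | zero => simp [chain]
  | succ n ih =>
    set g := fun k : Fin (n+1) => f k.succ with hg
    calc ∑' p : ℕ × ℕ, chain (n+1) f p.1 p.2 ^ 2
        = ∑' p : ℕ × ℕ, (∑' z, f 0 p.1 z * chain n g z p.2) ^ 2 := rfl
      _ ≤ ∑' p : ℕ × ℕ, (∑' z, f 0 p.1 z ^ 2) * (∑' z, chain n g z p.2 ^ 2) :=
          ENNReal.tsum_le_tsum fun p => enn_cs_sq _ _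
      _ = (∑' x, ∑' z, f 0 x z ^ 2) * (∑' y, ∑' z, chain n g z y ^ 2) :=
          enn_tsum_mul_prod (fun x => ∑' z, f 0 x z ^ 2) (fun y => ∑' z, chain n g z y ^ 2)
      _ = (∑' p : ℕ × ℕ, f 0 p.1 p.2 ^ 2) * (∑' p : ℕ × ℕ, chain n g p.1 p.2 ^ 2) := by
          rw [ENNReal.tsum_prod (f := fun a b => f 0 a b ^ 2),
            ENNReal.tsum_prod (f := fun a b => chain n g a b ^ 2),
            ENNReal.tsum_comm (f := fun y z => chain n g z y ^ 2)]
      _ ≤ (∑' p : ℕ × ℕ, f 0 p.1 p.2 ^ 2) * ∏ k, ∑' p : ℕ × ℕ, g k p.1 p.2 ^ 2 :=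
          mul_le_mul_right (ih g) _
      _ = ∏ k, ∑' p : ℕ × ℕ, f k p.1 p.2 ^ 2 := by
          conv_rhs => rw [Fin.prod_univ_succ]

lemma path_sum (n : ℕ) (f : Fin (n+1) → ℕ → ℕ → ℝ≥0∞) (x y : ℕ) :
    ∑' i : Fin n → ℕ, ∏ k : Fin (n+1),
        f k ((Fin.cons x (Fin.snoc i y) : Fin (n+2) → ℕ) k.castSucc)
          ((Fin.cons x (Fin.snoc i y) : Fin (n+2) → ℕ) k.succ)
      = chain n f x y := by
  induction n generalizing x with
  | zero =>
    rw [tsum_eq_single (fun j => j.elim0) (fun i hi => absurd (funext fun j => j.elim0) hi)]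
    simp [chain, Fin.snoc]
  | succ n ih =>
    rw [← Equiv.tsum_eq (Fin.consEquiv fun _ : Fin (n+1) => ℕ), ENNReal.tsum_prod']
    rw [show chain (n+1) f x y = ∑' z, f 0 x z * chain n (fun k => f k.succ) z y from rfl]
    refine tsum_congr fun z => ?_
    rw [← ih (fun k => f k.succ) z, ← ENNReal.tsum_mul_left]
    refine tsum_congr fun i => ?_
    have he : (Fin.consEquiv fun _ : Fin (n+1) => ℕ) (z, i) = Fin.cons z i := rfl
    have hv : (Fin.cons x (Fin.snoc (Fin.cons z i) y) : Fin (n+3) → ℕ)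
        = (Fin.cons x (Fin.cons z (Fin.snoc i y)) : Fin (n+3) → ℕ) :=
      congrArg _ (Fin.cons_snoc_eq_snoc_cons z i y).symm
    rw [he, hv, Fin.prod_univ_succ]
    have hA : (Fin.cons x (Fin.cons z (Fin.snoc i y)) : Fin (n+3) → ℕ) (Fin.castSucc 0) = x := by
      simp
    have hB : (Fin.cons x (Fin.cons z (Fin.snoc i y)) : Fin (n+3) → ℕ) (Fin.succ 0) = z := by
      rw [Fin.cons_succ, Fin.cons_zero]
    rw [hA, hB]
    congr 1

lemma cyclic_eq (n : ℕ) (f : Fin (n+2) → ℕ → ℕ → ℝ≥0∞) :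
    ∑' i : Fin (n+2) → ℕ, ∏ k, f k (i k) (i (k+1))
      = ∑' x, ∑' y, chain n (fun k : Fin (n+1) => f k.castSucc) x y * f (Fin.last (n+1)) y x := by
  rw [← Equiv.tsum_eq (Fin.consEquiv fun _ : Fin (n+2) => ℕ), ENNReal.tsum_prod']
  refine tsum_congr fun x => ?_
  rw [← Equiv.tsum_eq (Fin.snocEquiv fun _ : Fin (n+1) => ℕ), ENNReal.tsum_prod']
  refine tsum_congr fun y => ?_
  rw [← path_sum n (fun k => f k.castSucc) x y, ← ENNReal.tsum_mul_right]
  refine tsum_congr fun j => ?_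
  have he : (Fin.consEquiv fun _ : Fin (n+2) => ℕ) (x, (Fin.snocEquiv fun _ : Fin (n+1) => ℕ) (y, j))
      = (Fin.cons x (Fin.snoc j y) : Fin (n+2) → ℕ) := rfl
  rw [he, Fin.prod_univ_castSucc]
  congr 1
  · refine Finset.prod_congr rfl fun k _ => ?_
    rw [Fin.coeSucc_eq_succ]
  · have hl1 : (Fin.cons x (Fin.snoc j y) : Fin (n+2) → ℕ) (Fin.last (n+1)) = y := by
      rw [← Fin.succ_last, Fin.cons_succ, Fin.snoc_last]
    have hl2 : (Fin.cons x (Fin.snoc j y) : Fin (n+2) → ℕ) (Fin.last (n+1) + 1) = x := by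
      rw [Fin.last_add_one, Fin.cons_zero]
    rw [hl1, hl2]

lemma enn_main (n : ℕ) (f : Fin (n+2) → ℕ → ℕ → ℝ≥0∞) :
    ∑' i : Fin (n+2) → ℕ, ∏ k, f k (i k) (i (k+1))
      ≤ ∏ k, (∑' p : ℕ × ℕ, f k p.1 p.2 ^ 2) ^ (1/2 : ℝ) := by
  set g := fun k : Fin (n+1) => f k.castSucc with hg
  set L := Fin.last (n+1) with hL
  rw [cyclic_eq]
  have h1 : (∑' x, ∑' y, chain n g x y * f L y x)
      = ∑' p : ℕ × ℕ, chain n g p.1 p.2 * f L p.2 p.1 :=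
    (ENNReal.tsum_prod (f := fun x y => chain n g x y * f L y x)).symm
  have hswap : (∑' p : ℕ × ℕ, f L p.2 p.1 ^ 2) = ∑' p : ℕ × ℕ, f L p.1 p.2 ^ 2 :=
    ((Equiv.prodComm ℕ ℕ).tsum_eq (fun p : ℕ × ℕ => f L p.2 p.1 ^ 2)).symm
  calc (∑' x, ∑' y, chain n g x y * f L y x)
      = ∑' p : ℕ × ℕ, chain n g p.1 p.2 * f L p.2 p.1 := h1
    _ ≤ (∑' p : ℕ × ℕ, chain n g p.1 p.2 ^ 2) ^ (1/2 : ℝ)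
        * (∑' p : ℕ × ℕ, f L p.2 p.1 ^ 2) ^ (1/2 : ℝ) :=
        enn_cs (fun p : ℕ × ℕ => chain n g p.1 p.2) (fun p : ℕ × ℕ => f L p.2 p.1)
    _ ≤ (∏ k, ∑' p : ℕ × ℕ, g k p.1 p.2 ^ 2) ^ (1/2 : ℝ)
        * (∑' p : ℕ × ℕ, f L p.1 p.2 ^ 2) ^ (1/2 : ℝ) := by
        rw [hswap]
        exact mul_le_mul_left (ENNReal.rpow_le_rpow (chain_sq_le n g) (by norm_num)) _
    _ = (∏ k : Fin (n+1), (∑' p : ℕ × ℕ, g k p.1 p.2 ^ 2) ^ (1/2 : ℝ))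
        * (∑' p : ℕ × ℕ, f L p.1 p.2 ^ 2) ^ (1/2 : ℝ) := by
        rw [ENNReal.prod_rpow_of_nonneg (by norm_num : (0:ℝ) ≤ 1/2)]
    _ = ∏ k, (∑' p : ℕ × ℕ, f k p.1 p.2 ^ 2) ^ (1/2 : ℝ) := by
        conv_rhs => rw [Fin.prod_univ_castSucc]

/-- For `n ≥ 2` (here `n = m + 2`) and square-summable double sequences
`a_k : ℕ × ℕ → ℂ` (`k = 1, …, n`), the cyclic sum satisfies
`|∑_{i₁,…,i_n} ∏_k a_k(i_k, i_{k+1})| ≤ ∏_k (∑_{i,j} |a_k(i,j)|²)^{1/2}`,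
with the convention `i_{n+1} = i₁` (the index `k + 1` is taken cyclically in `Fin n`). -/
theorem statement_5 (m : ℕ) (a : Fin (m + 2) → ℕ → ℕ → ℂ)
    (ha : ∀ k, Summable fun p : ℕ × ℕ => ‖a k p.1 p.2‖ ^ 2) :
    Summable (fun i : Fin (m + 2) → ℕ => ∏ k, a k (i k) (i (k + 1))) ∧
    ‖∑' i : Fin (m + 2) → ℕ, ∏ k, a k (i k) (i (k + 1))‖ ≤
      ∏ k, Real.sqrt (∑' p : ℕ × ℕ, ‖a k p.1 p.2‖ ^ 2) := by
  classical
  set F : (Fin (m + 2) → ℕ) → ℂ := fun i => ∏ k, a k (i k) (i (k + 1)) with hF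
  set f : Fin (m + 2) → ℕ → ℕ → ℝ≥0∞ := fun k x y => (‖a k x y‖₊ : ℝ≥0∞) with hf
  -- nnnorm of the product
  have hFnn : ∀ i : Fin (m + 2) → ℕ, (‖F i‖₊ : ℝ≥0∞) = ∏ k, f k (i k) (i (k + 1)) := by
    intro i
    rw [hF]
    push_cast [nnnorm_prod]
    rfl
  -- summability of nnnorm squares
  have hu : ∀ k, Summable fun p : ℕ × ℕ => (‖a k p.1 p.2‖₊ : ℝ≥0) ^ 2 := by
    intro k
    rw [← NNReal.summable_coe]
    simpa using ha k
  have hN2 : ∀ k, (∑' p : ℕ × ℕ, f k p.1 p.2 ^ 2)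
      = ((∑' p : ℕ × ℕ, ‖a k p.1 p.2‖₊ ^ 2 : ℝ≥0) : ℝ≥0∞) := by
    intro k
    rw [ENNReal.coe_tsum (hu k)]
    exact tsum_congr fun p => by rw [hf]; push_cast; rfl
  have hN2top : ∀ k, (∑' p : ℕ × ℕ, f k p.1 p.2 ^ 2) ≠ ⊤ := fun k => by
    rw [hN2 k]; exact ENNReal.coe_ne_top
  -- the ENNReal bound
  have hmain := enn_main m f
  have hRHS_ne_top : (∏ k, (∑' p : ℕ × ℕ, f k p.1 p.2 ^ 2) ^ (1/2 : ℝ)) ≠ ⊤ := by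
    refine (ENNReal.prod_lt_top fun k _ => ?_).ne
    exact (ENNReal.rpow_ne_top_of_nonneg (by norm_num) (hN2top k)).lt_top
  have hFsum_ne_top : (∑' i, (‖F i‖₊ : ℝ≥0∞)) ≠ ⊤ := by
    refine ne_top_of_le_ne_top hRHS_ne_top ?_
    calc (∑' i, (‖F i‖₊ : ℝ≥0∞)) = ∑' i : Fin (m + 2) → ℕ, ∏ k, f k (i k) (i (k + 1)) :=
          tsum_congr hFnn
      _ ≤ _ := hmain
  have hsnn : Summable fun i => ‖F i‖₊ := ENNReal.tsum_coe_ne_top_iff_summable.1 hFsum_ne_top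
  have hsnorm : Summable fun i => ‖F i‖ := by
    rw [← NNReal.summable_coe] at hsnn; exact hsnn
  have hsF : Summable F := Summable.of_norm hsnorm
  refine ⟨hsF, ?_⟩
  -- identify the RHS
  have hsqrt : ∀ k, Real.sqrt (∑' p : ℕ × ℕ, ‖a k p.1 p.2‖ ^ 2)
      = ((∑' p : ℕ × ℕ, f k p.1 p.2 ^ 2) ^ (1/2 : ℝ)).toReal := by
    intro k
    rw [← ENNReal.toReal_rpow, ← Real.sqrt_eq_rpow]
    congr 1
    rw [hN2 k, ENNReal.coe_toReal, NNReal.coe_tsum]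
    exact tsum_congr fun p => by push_cast; rfl
  calc ‖∑' i, F i‖ ≤ ∑' i, ‖F i‖ := norm_tsum_le_tsum_norm hsnorm
    _ = (∑' i, (‖F i‖₊ : ℝ≥0∞)).toReal := by
        rw [← ENNReal.coe_tsum hsnn, ENNReal.coe_toReal, NNReal.coe_tsum]
        exact tsum_congr fun i => (coe_nnnorm (F i)).symm
    _ ≤ (∏ k, (∑' p : ℕ × ℕ, f k p.1 p.2 ^ 2) ^ (1/2 : ℝ)).toReal := by
        refine ENNReal.toReal_mono hRHS_ne_top ?_
        calc (∑' i, (‖F i‖₊ : ℝ≥0∞)) = ∑' i : Fin (m + 2) → ℕ, ∏ k, f k (i k) (i (k + 1)) :=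
              tsum_congr hFnn
          _ ≤ _ := hmain
    _ = ∏ k, Real.sqrt (∑' p : ℕ × ℕ, ‖a k p.1 p.2‖ ^ 2) := by
        rw [ENNReal.toReal_prod]
        exact Finset.prod_congr rfl fun k _ => (hsqrt k).symm
end

section
/- Let H₁, H₂ be separable complex Hilbert spaces and A : H₁ → H₂ a linear operator with ‖A‖ ≤ 1. Define the composition operator C_A : F(H₂) → F(H₁), f ↦ f ∘ A, between the associated Fock spaces. Then C_A is a bounded operator with ‖C_A‖ ≤ 1, its adjoint is (C_A)* = C_{A*}, if A is surjective then C_A is injective, and if A A* = id then C_A is an isometric embedding. -/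
noncomputable section

open Complex MeasureTheory Filter Topology
open scoped ENNReal ComplexConjugate

/-- The Schatten `p`-norm of an operator on a complex Hilbert space, defined via the
variational formula `‖A‖_{S_p} = (sup_{e,f orthonormal} Σ_i |⟨f i, A (e i)⟩|^p)^{1/p}`,
the supremum being taken over all finite orthonormal families. -/
noncomputable def schattenNorm {H : Type*} [NormedAddCommGroup H] [InnerProductSpace ℂ H]
    (p : ℝ) (A : H →L[ℂ] H) : ℝ≥0∞ :=
  (⨆ (n : ℕ) (e : Fin n → H) (f : Fin n → H) (_ : Orthonormal ℂ e) (_ : Orthonormal ℂ f),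
      ∑ i, (‖(inner ℂ (f i) (A (e i)) : ℂ)‖₊ : ℝ≥0∞) ^ p) ^ p⁻¹

/-- The trace of a (trace class) operator on a complex Hilbert space, computed in a fixed
Hilbert basis. -/
noncomputable def traceC {H : Type*} [NormedAddCommGroup H] [InnerProductSpace ℂ H]
    [CompleteSpace H] (A : H →L[ℂ] H) : ℂ :=
  ∑' i : (exists_hilbertBasis ℂ H).choose,
    (inner ℂ ((exists_hilbertBasis ℂ H).choose_spec.choose i)
      (A ((exists_hilbertBasis ℂ H).choose_spec.choose i)) : ℂ)

/-- `D` is the entire function `z ↦ det_{n₀}(1 - z A)`, characterized as the unique entire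
function agreeing with `exp (-∑_{n ≥ n₀} zⁿ/n · trace Aⁿ)` near `0`. -/
def IsRegDetFun {H : Type*} [NormedAddCommGroup H] [InnerProductSpace ℂ H] [CompleteSpace H]
    (n₀ : ℕ) (A : H →L[ℂ] H) (D : ℂ → ℂ) : Prop :=
  Differentiable ℂ D ∧
    ∀ᶠ z in 𝓝 (0 : ℂ), D z =
      Complex.exp (- ∑' k : ℕ, z ^ (k + n₀) / ((k + n₀ : ℕ) : ℂ) * traceC (A ^ (k + n₀)))

/-- `d` is the Fredholm determinant `det(1 - A)` of the trace class operator `A`. -/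
def IsFredholmDet {H : Type*} [NormedAddCommGroup H] [InnerProductSpace ℂ H] [CompleteSpace H]
    (A : H →L[ℂ] H) (d : ℂ) : Prop :=
  ∃ D : ℂ → ℂ, IsRegDetFun 1 A D ∧ D 1 = d

/-- `lam` enumerates the eigenvalues of `B` (with `0` allowed as padding), every nonzero
value occurring as often as the (algebraic) multiplicity of the corresponding eigenvalue. -/
def IsEigenSeq {H : Type*} [NormedAddCommGroup H] [InnerProductSpace ℂ H]
    (B : H →L[ℂ] H) (lam : ℕ → ℂ) : Prop :=
  ∀ μ : ℂ, μ ≠ 0 →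
    {n : ℕ | lam n = μ}.Finite ∧
      Nat.card {n : ℕ | lam n = μ} =
        Module.finrank ℂ (Module.End.maxGenEigenspace (↑B : H →ₗ[ℂ] H) μ)

/-- `t` realizes `H₃` as the Hilbert space tensor product `H₁ ⊗̂ H₂`. -/
def IsHilbertTensor {H₁ H₂ H₃ : Type*} [NormedAddCommGroup H₁] [InnerProductSpace ℂ H₁]
    [NormedAddCommGroup H₂] [InnerProductSpace ℂ H₂]
    [NormedAddCommGroup H₃] [InnerProductSpace ℂ H₃]
    (t : H₁ →ₗ[ℂ] H₂ →ₗ[ℂ] H₃) : Prop :=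
  (∀ (x x' : H₁) (y y' : H₂),
      (inner ℂ (t x y) (t x' y') : ℂ) = (inner ℂ x x' : ℂ) * (inner ℂ y y' : ℂ)) ∧
    Dense (↑(Submodule.span ℂ (Set.range fun p : H₁ × H₂ => t p.1 p.2)) : Set H₃)

/-- `w` realizes `E` as the `ν`-th exterior power `∧^ν H₂` of the Hilbert space `H₂`,
with the inner product of wedges given by the Gram determinant. -/
def IsExteriorPower {H₂ E : Type*} [NormedAddCommGroup H₂] [InnerProductSpace ℂ H₂]
    [NormedAddCommGroup E] [InnerProductSpace ℂ E]
    (ν : ℕ) (w : (Fin ν → H₂) → E) : Prop :=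
  (∀ x y : Fin ν → H₂,
      (inner ℂ (w x) (w y) : ℂ) = (Matrix.of fun i j => (inner ℂ (x i) (y j) : ℂ)).det) ∧
    Dense (↑(Submodule.span ℂ (Set.range w)) : Set E)

end

noncomputable section

open Complex

/-- `(𝓕, eval, k)` is a realization of the Fock space `F(H)`: the reproducing kernel Hilbert
space of functions on `H` with kernel `k(z,w) = exp (π ⟨z|w⟩)`; in Mathlib's convention
(inner products conjugate-linear in the first variable) the kernel vector `k w` satisfies
`(k w)(z) = exp (π ⟪w, z⟫)` and the reproducing property reads `f(y) = ⟪k y, f⟫`. -/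
structure IsFockSpace (H 𝓕 : Type*) [NormedAddCommGroup H] [InnerProductSpace ℂ H]
    [NormedAddCommGroup 𝓕] [InnerProductSpace ℂ 𝓕]
    (eval : 𝓕 →ₗ[ℂ] (H → ℂ)) (k : H → 𝓕) : Prop where
  eval_injective : Function.Injective eval
  reproducing : ∀ (f : 𝓕) (y : H), eval f y = (inner ℂ (k y) f : ℂ)
  kernel_apply : ∀ w z : H, eval (k w) z = Complex.exp ((Real.pi : ℂ) * (inner ℂ w z : ℂ))

end

noncomputable section FockCompositionAux

open Complex
open scoped ComplexConjugate ComplexOrder Matrix NNReal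

universe v

/-- A kernel admitting a finite "Gram" factorization. -/
private def HasFactor {ι : Type v} [Fintype ι] (K : ι → ι → ℂ) : Prop :=
  ∃ (κ : Type v) (_ : Fintype κ) (B : κ → ι → ℂ),
    ∀ i j, K i j = ∑ a, conj (B a i) * B a j

private lemma HasFactor.quad_nonneg {ι : Type v} [Fintype ι] {K : ι → ι → ℂ}
    (h : HasFactor K) (x : ι → ℂ) :
    0 ≤ (∑ i, ∑ j, conj (x i) * x j * K i j).re := by
  obtain ⟨κ, _, B, hB⟩ := h
  have key : ∑ i, ∑ j, conj (x i) * x j * K i j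
      = ∑ a, conj (∑ i, x i * B a i) * (∑ j, x j * B a j) := by
    have h1 : ∀ a : κ, conj (∑ i, x i * B a i) * (∑ j, x j * B a j)
        = ∑ i, ∑ j, conj (x i) * x j * (conj (B a i) * B a j) := by
      intro a
      rw [map_sum, Finset.sum_mul_sum]
      exact Finset.sum_congr rfl fun i _ => Finset.sum_congr rfl fun j _ => by
        rw [map_mul]; ring
    simp only [h1, hB, Finset.mul_sum]
    calc (∑ i, ∑ j, ∑ a, conj (x i) * x j * (conj (B a i) * B a j))
        = ∑ i, ∑ a, ∑ j, conj (x i) * x j * (conj (B a i) * B a j) :=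
          Finset.sum_congr rfl fun i _ => Finset.sum_comm
      _ = ∑ a, ∑ i, ∑ j, conj (x i) * x j * (conj (B a i) * B a j) := Finset.sum_comm
  rw [key, Complex.re_sum]
  refine Finset.sum_nonneg fun a _ => ?_
  rw [← Complex.normSq_eq_conj_mul_self, Complex.ofReal_re]
  exact Complex.normSq_nonneg _

private lemma HasFactor.mul {ι : Type v} [Fintype ι] {K K' : ι → ι → ℂ}
    (h : HasFactor K) (h' : HasFactor K') :
    HasFactor (fun i j => K i j * K' i j) := by
  obtain ⟨κ, _, B, hB⟩ := h
  obtain ⟨κ', _, B', hB'⟩ := h'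
  refine ⟨κ × κ', inferInstance, fun a i => B a.1 i * B' a.2 i, fun i j => ?_⟩
  simp only
  rw [hB, hB', Finset.sum_mul_sum, Fintype.sum_prod_type]
  exact Finset.sum_congr rfl fun a _ => Finset.sum_congr rfl fun b _ => by
    simp only [map_mul]; ring

private lemma HasFactor.pow {ι : Type v} [Fintype ι] {K : ι → ι → ℂ}
    (h : HasFactor K) (n : ℕ) : HasFactor (fun i j => K i j ^ (n + 1)) := by
  induction n with
  | zero => simpa using h
  | succ n ih => simpa [pow_succ] using ih.mul h

private lemma hasFactor_of_posSemidef {ι : Type v} [Fintype ι] [DecidableEq ι]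
    {M : Matrix ι ι ℂ} (h : M.PosSemidef) : HasFactor (fun i j => M i j) := by
  obtain ⟨m, v, hv⟩ := Matrix.posSemidef_iff_eq_sum_vecMulVec.mp h
  refine ⟨ULift (Fin m), inferInstance, fun a i => conj (v a.down i), fun i j => ?_⟩
  show M i j = ∑ a : ULift (Fin m), conj (conj (v a.down i)) * conj (v a.down j)
  rw [hv, Matrix.sum_apply]
  simp only [Matrix.vecMulVec_apply, Pi.star_apply, RCLike.star_def, starRingEnd_self_apply]
  exact (Equiv.ulift.symm.sum_comp (fun a : ULift (Fin m) => v a.down i * conj (v a.down j)))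

private lemma gram_posSemidef {ι : Type v} {W : Type*} [Fintype ι] [NormedAddCommGroup W]
    [InnerProductSpace ℂ W] (v : ι → W) :
    (Matrix.of fun i j => (inner ℂ (v i) (v j) : ℂ)).PosSemidef := by
  rw [Matrix.posSemidef_iff_dotProduct_mulVec]
  constructor
  · ext i j
    simp [Matrix.conjTranspose_apply, inner_conj_symm]
  · intro x
    have key : dotProduct (star x)
          ((Matrix.of fun i j => (inner ℂ (v i) (v j) : ℂ)).mulVec x)
        = inner ℂ (∑ i, x i • v i) (∑ j, x j • v j) := by
      simp only [dotProduct, Matrix.mulVec, Matrix.of_apply, Pi.star_apply,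
        RCLike.star_def, sum_inner, inner_sum, inner_smul_left, inner_smul_right,
        dotProduct, Finset.mul_sum]
      rw [Finset.sum_comm]
      exact Finset.sum_congr rfl fun i _ => Finset.sum_congr rfl fun j _ => by ring
    have h2 : (inner ℂ (∑ i, x i • v i) (∑ j, x j • v j) : ℂ)
        = ((‖∑ i, x i • v i‖ ^ 2 : ℝ) : ℂ) := by
      rw [inner_self_eq_norm_sq_to_K]; push_cast; rfl
    rw [key, h2]
    exact Complex.zero_le_real.mpr (sq_nonneg _)

/-- Expansion of inner ℂ products of linear combinations. -/
private lemma inner_sum_sum {W : Type*} [NormedAddCommGroup W] [InnerProductSpace ℂ W]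
    {ι : Type v} [Fintype ι] (x y : ι → ℂ) (u w : ι → W) :
    (inner ℂ (∑ i, x i • u i) (∑ j, y j • w j) : ℂ)
      = ∑ i, ∑ j, conj (x i) * y j * (inner ℂ (u i) (w j) : ℂ) := by
  rw [sum_inner]
  refine Finset.sum_congr rfl fun i _ => ?_
  rw [inner_smul_left, inner_sum, Finset.mul_sum]
  refine Finset.sum_congr rfl fun j _ => ?_
  rw [inner_smul_right]
  ring

private lemma norm_sq_sum_smul {W : Type*} [NormedAddCommGroup W] [InnerProductSpace ℂ W]
    {ι : Type v} [Fintype ι] (x : ι → ℂ) (u : ι → W) :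
    ‖∑ i, x i • u i‖ ^ 2 = (∑ i, ∑ j, conj (x i) * x j * (inner ℂ (u i) (u j) : ℂ)).re := by
  rw [← inner_self_eq_norm_sq (𝕜 := ℂ), inner_sum_sum]
  rfl

/-- The key positivity statement: if `G` and `N` admit Gram factorizations, then the
quadratic form attached to the entrywise product `G ⊙ (exp(πN) - 1)` is nonnegative. -/
private lemma quad_exp_nonneg {ι : Type v} [Fintype ι] {G N : ι → ι → ℂ}
    (hG : HasFactor G) (hN : HasFactor N) (x : ι → ℂ) :
    0 ≤ (∑ i, ∑ j,
      conj (x i) * x j * (G i j * (Complex.exp ((Real.pi : ℂ) * N i j) - 1))).re := by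
  classical
  have hser : ∀ u : ℂ, Complex.exp u - 1
      = ∑' n : ℕ, u ^ (n + 1) / (Nat.factorial (n + 1) : ℂ) := by
    intro u
    have h0 : Complex.exp u = ∑' n : ℕ, u ^ n / (Nat.factorial n : ℂ) := by
      rw [Complex.exp_eq_exp_ℂ, NormedSpace.exp_eq_tsum_div]
    rw [h0, Summable.tsum_eq_zero_add (NormedSpace.expSeries_div_summable u)]
    simp
  have hgsum : ∀ u : ℂ, Summable (fun n : ℕ => u ^ (n + 1) / (Nat.factorial (n + 1) : ℂ)) :=
    fun u => (NormedSpace.expSeries_div_summable u).comp_injective Nat.succ_injective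
  set c : ℕ → ℝ := fun n => Real.pi ^ (n + 1) / (Nat.factorial (n + 1) : ℝ) with hc
  set t : ι → ι → ℕ → ℂ :=
    fun i j n => ((c n : ℝ) : ℂ) * (conj (x i) * x j * (G i j * N i j ^ (n + 1))) with ht
  have htc : ∀ i j n, (conj (x i) * x j * G i j) *
      (((Real.pi : ℂ) * N i j) ^ (n + 1) / (Nat.factorial (n + 1) : ℂ)) = t i j n := by
    intro i j n
    rw [ht, hc]
    push_cast
    rw [mul_pow]
    ring
  have hterm : ∀ i j, conj (x i) * x j * (G i j * (Complex.exp ((Real.pi : ℂ) * N i j) - 1))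
      = ∑' n : ℕ, t i j n := by
    intro i j
    calc conj (x i) * x j * (G i j * (Complex.exp ((Real.pi : ℂ) * N i j) - 1))
        = (conj (x i) * x j * G i j) *
            (∑' n : ℕ, ((Real.pi : ℂ) * N i j) ^ (n + 1) / (Nat.factorial (n + 1) : ℂ)) := by
          rw [← hser]; ring
      _ = ∑' n : ℕ, (conj (x i) * x j * G i j) *
            (((Real.pi : ℂ) * N i j) ^ (n + 1) / (Nat.factorial (n + 1) : ℂ)) :=
          tsum_mul_left.symm
      _ = ∑' n : ℕ, t i j n := tsum_congr fun n => htc i j n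
  have htsummable : ∀ i j, Summable (t i j) := by
    intro i j
    exact ((hgsum ((Real.pi : ℂ) * N i j)).mul_left (conj (x i) * x j * G i j)).congr
      fun n => htc i j n
  simp only [hterm]
  have hswap : (∑ i, ∑ j, ∑' n, t i j n) = ∑' n, ∑ i, ∑ j, t i j n := by
    have h1 : ∀ i : ι, (∑ j, ∑' n, t i j n) = ∑' n, ∑ j, t i j n := fun i =>
      (Summable.tsum_finsetSum (fun j _ => htsummable i j)).symm
    simp only [h1]
    exact (Summable.tsum_finsetSum (fun i _ => summable_sum (fun j _ => htsummable i j))).symm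
  rw [hswap, Complex.re_tsum (summable_sum (fun i _ => summable_sum
    (fun j _ => htsummable i j)))]
  refine tsum_nonneg fun n => ?_
  have hsn : (∑ i, ∑ j, t i j n) = ((c n : ℝ) : ℂ) * ∑ i, ∑ j,
      conj (x i) * x j * (G i j * N i j ^ (n + 1)) := by
    simp only [ht, Finset.mul_sum]
  rw [hsn, Complex.re_ofReal_mul]
  have hc0 : 0 ≤ c n := by
    rw [hc]
    positivity
  exact mul_nonneg hc0 ((hG.mul (hN.pow n)).quad_nonneg x)

private lemma IsFockSpace.inner_kernel {H 𝓕 : Type*} [NormedAddCommGroup H]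
    [InnerProductSpace ℂ H] [NormedAddCommGroup 𝓕] [InnerProductSpace ℂ 𝓕]
    {ev : 𝓕 →ₗ[ℂ] (H → ℂ)} {k : H → 𝓕} (hF : IsFockSpace H 𝓕 ev k) (y w : H) :
    (inner ℂ (k y) (k w) : ℂ) = Complex.exp ((Real.pi : ℂ) * (inner ℂ w y : ℂ)) := by
  rw [← hF.reproducing (k w) y, hF.kernel_apply]

/-- The fundamental contraction inequality between kernel combinations. -/
private lemma fock_key {H₁ H₂ 𝓕₁ 𝓕₂ : Type*}
    [NormedAddCommGroup H₁] [InnerProductSpace ℂ H₁]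
    [NormedAddCommGroup H₂] [InnerProductSpace ℂ H₂]
    [NormedAddCommGroup 𝓕₁] [InnerProductSpace ℂ 𝓕₁]
    [NormedAddCommGroup 𝓕₂] [InnerProductSpace ℂ 𝓕₂]
    {ev₁ : 𝓕₁ →ₗ[ℂ] (H₁ → ℂ)} {k₁ : H₁ → 𝓕₁} (hF₁ : IsFockSpace H₁ 𝓕₁ ev₁ k₁)
    {ev₂ : 𝓕₂ →ₗ[ℂ] (H₂ → ℂ)} {k₂ : H₂ → 𝓕₂} (hF₂ : IsFockSpace H₂ 𝓕₂ ev₂ k₂)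
    (A : H₁ →L[ℂ] H₂) (hA : ‖A‖ ≤ 1)
    {ι : Type v} [Fintype ι] (x : ι → ℂ) (z : ι → H₁) :
    ‖∑ i, x i • k₂ (A (z i))‖ ≤ ‖∑ i, x i • k₁ (z i)‖ := by
  classical
  have hG : HasFactor (fun i j : ι => (inner ℂ (k₂ (A (z i))) (k₂ (A (z j))) : ℂ)) :=
    hasFactor_of_posSemidef (gram_posSemidef (fun i => k₂ (A (z i))))
  have hNps : (Matrix.of (fun i j : ι =>
      (inner ℂ (z j) (z i) : ℂ) - (inner ℂ (A (z j)) (A (z i)) : ℂ))).PosSemidef := by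
    rw [Matrix.posSemidef_iff_dotProduct_mulVec]
    constructor
    · ext i j
      simp only [Matrix.conjTranspose_apply, Matrix.of_apply, RCLike.star_def, map_sub,
        inner_conj_symm]
    · intro y
      have lhs_eq : dotProduct (star y) ((Matrix.of (fun i j : ι =>
            (inner ℂ (z j) (z i) : ℂ) - (inner ℂ (A (z j)) (A (z i)) : ℂ))).mulVec y)
          = ∑ i, ∑ j, conj (y i) * y j *
              ((inner ℂ (z j) (z i) : ℂ) - (inner ℂ (A (z j)) (A (z i)) : ℂ)) := by
        simp only [dotProduct, Matrix.mulVec, Matrix.of_apply, Pi.star_apply,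
          RCLike.star_def, dotProduct, Finset.mul_sum]
        refine Finset.sum_congr rfl fun i _ => Finset.sum_congr rfl fun j _ => by ring
      set w : H₁ := ∑ i, conj (y i) • z i with hw
      have hAw : A w = ∑ i, conj (y i) • A (z i) := by
        rw [hw, map_sum]
        exact Finset.sum_congr rfl fun i _ => by rw [map_smul]
      have hww : (inner ℂ w w : ℂ) = ∑ i, ∑ j, conj (y i) * y j * (inner ℂ (z j) (z i) : ℂ) := by
        rw [hw, inner_sum_sum]
        rw [Finset.sum_comm]
        refine Finset.sum_congr rfl fun i _ => Finset.sum_congr rfl fun j _ => by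
          simp only [starRingEnd_self_apply]
          ring
      have hAwAw : (inner ℂ (A w) (A w) : ℂ)
          = ∑ i, ∑ j, conj (y i) * y j * (inner ℂ (A (z j)) (A (z i)) : ℂ) := by
        rw [hAw, inner_sum_sum]
        rw [Finset.sum_comm]
        refine Finset.sum_congr rfl fun i _ => Finset.sum_congr rfl fun j _ => by
          simp only [starRingEnd_self_apply]
          ring
      have key : dotProduct (star y) ((Matrix.of (fun i j : ι =>
            (inner ℂ (z j) (z i) : ℂ) - (inner ℂ (A (z j)) (A (z i)) : ℂ))).mulVec y)
          = (inner ℂ w w : ℂ) - (inner ℂ (A w) (A w) : ℂ) := by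
        rw [lhs_eq, hww, hAwAw, ← Finset.sum_sub_distrib]
        refine Finset.sum_congr rfl fun i _ => ?_
        rw [← Finset.sum_sub_distrib]
        refine Finset.sum_congr rfl fun j _ => by ring
      rw [key]
      have hwle : ‖A w‖ ≤ ‖w‖ := by
        calc ‖A w‖ ≤ ‖A‖ * ‖w‖ := A.le_opNorm w
          _ ≤ 1 * ‖w‖ := by gcongr
          _ = ‖w‖ := one_mul _
      have h1 : (inner ℂ w w : ℂ) = ((‖w‖ ^ 2 : ℝ) : ℂ) := by
        rw [inner_self_eq_norm_sq_to_K]; push_cast; rfl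
      have h2 : (inner ℂ (A w) (A w) : ℂ) = ((‖A w‖ ^ 2 : ℝ) : ℂ) := by
        rw [inner_self_eq_norm_sq_to_K]; push_cast; rfl
      rw [h1, h2, ← Complex.ofReal_sub]
      refine Complex.zero_le_real.mpr (sub_nonneg.mpr ?_)
      exact pow_le_pow_left₀ (norm_nonneg _) hwle 2
  have hN : HasFactor (fun i j : ι =>
      (inner ℂ (z j) (z i) : ℂ) - (inner ℂ (A (z j)) (A (z i)) : ℂ)) :=
    hasFactor_of_posSemidef hNps
  have h2 : ‖∑ i, x i • k₂ (A (z i))‖ ^ 2 ≤ ‖∑ i, x i • k₁ (z i)‖ ^ 2 := by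
    rw [norm_sq_sum_smul, norm_sq_sum_smul, ← sub_nonneg, ← Complex.sub_re,
      ← Finset.sum_sub_distrib]
    simp only [← Finset.sum_sub_distrib, ← mul_sub]
    have hsplit : ∀ i j : ι,
        (inner ℂ (k₁ (z i)) (k₁ (z j)) : ℂ) - (inner ℂ (k₂ (A (z i))) (k₂ (A (z j))) : ℂ)
        = (inner ℂ (k₂ (A (z i))) (k₂ (A (z j))) : ℂ) *
            (Complex.exp ((Real.pi : ℂ) *
              ((inner ℂ (z j) (z i) : ℂ) - (inner ℂ (A (z j)) (A (z i)) : ℂ))) - 1) := by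
      intro i j
      rw [hF₁.inner_kernel, hF₂.inner_kernel]
      have hsum : (Real.pi : ℂ) * (inner ℂ (z j) (z i) : ℂ)
          = (Real.pi : ℂ) * (inner ℂ (A (z j)) (A (z i)) : ℂ)
            + (Real.pi : ℂ) * ((inner ℂ (z j) (z i) : ℂ)
                - (inner ℂ (A (z j)) (A (z i)) : ℂ)) := by
        ring
      rw [hsum, Complex.exp_add]
      ring
    simp only [hsplit]
    exact quad_exp_nonneg hG hN x
  have h3 := Real.sqrt_le_sqrt h2
  rwa [Real.sqrt_sq (norm_nonneg _), Real.sqrt_sq (norm_nonneg _)] at h3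

/-- The span of the kernel vectors is dense. -/
private lemma IsFockSpace.dense_span {H 𝓕 : Type*} [NormedAddCommGroup H]
    [InnerProductSpace ℂ H] [NormedAddCommGroup 𝓕] [InnerProductSpace ℂ 𝓕] [CompleteSpace 𝓕]
    {ev : 𝓕 →ₗ[ℂ] (H → ℂ)} {k : H → 𝓕} (hF : IsFockSpace H 𝓕 ev k) :
    (Submodule.span ℂ (Set.range k)).topologicalClosure = ⊤ := by
  rw [Submodule.topologicalClosure_eq_top_iff, Submodule.eq_bot_iff]
  intro f hf
  apply hF.eval_injective
  funext y
  rw [map_zero, hF.reproducing]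
  exact hf (k y) (Submodule.subset_span (Set.mem_range_self y))

/-- Existence of the composition operator, with norm at most `1`. -/
private lemma exists_comp {H₁ H₂ 𝓕₁ 𝓕₂ : Type*}
    [NormedAddCommGroup H₁] [InnerProductSpace ℂ H₁]
    [NormedAddCommGroup H₂] [InnerProductSpace ℂ H₂]
    [NormedAddCommGroup 𝓕₁] [InnerProductSpace ℂ 𝓕₁] [CompleteSpace 𝓕₁]
    [NormedAddCommGroup 𝓕₂] [InnerProductSpace ℂ 𝓕₂] [CompleteSpace 𝓕₂]
    {ev₁ : 𝓕₁ →ₗ[ℂ] (H₁ → ℂ)} {k₁ : H₁ → 𝓕₁} (hF₁ : IsFockSpace H₁ 𝓕₁ ev₁ k₁)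
    {ev₂ : 𝓕₂ →ₗ[ℂ] (H₂ → ℂ)} {k₂ : H₂ → 𝓕₂} (hF₂ : IsFockSpace H₂ 𝓕₂ ev₂ k₂)
    (A : H₁ →L[ℂ] H₂) (hA : ‖A‖ ≤ 1) :
    ∃ C : 𝓕₂ →L[ℂ] 𝓕₁, ‖C‖ ≤ 1 ∧ ∀ (f : 𝓕₂) (z : H₁), ev₁ (C f) z = ev₂ f (A z) := by
  classical
  set ψ : (H₁ →₀ ℂ) →ₗ[ℂ] 𝓕₁ := Finsupp.linearCombination ℂ k₁ with hψ
  set φ : (H₁ →₀ ℂ) →ₗ[ℂ] 𝓕₂ := Finsupp.linearCombination ℂ (fun y => k₂ (A y)) with hφ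
  have hbound : ∀ c : H₁ →₀ ℂ, ‖φ c‖ ≤ ‖ψ c‖ := by
    intro c
    have h1 : φ c = ∑ i : c.support, c i • k₂ (A i) := by
      rw [hφ, Finsupp.linearCombination_apply, Finsupp.sum, ← Finset.sum_coe_sort]
    have h2 : ψ c = ∑ i : c.support, c i • k₁ i := by
      rw [hψ, Finsupp.linearCombination_apply, Finsupp.sum, ← Finset.sum_coe_sort]
    rw [h1, h2]
    exact fock_key hF₁ hF₂ A hA _ _
  have hker : LinearMap.ker ψ ≤ LinearMap.ker φ := by
    intro c hc
    rw [LinearMap.mem_ker] at hc ⊢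
    have hb := hbound c
    rw [hc, norm_zero] at hb
    exact norm_le_zero_iff.mp hb
  set S : Submodule ℂ 𝓕₁ := LinearMap.range ψ with hS
  let L0 : ((H₁ →₀ ℂ) ⧸ LinearMap.ker ψ) →ₗ[ℂ] 𝓕₂ := Submodule.liftQ _ φ hker
  let L : S →ₗ[ℂ] 𝓕₂ := L0.comp (ψ.quotKerEquivRange.symm : S →ₗ[ℂ] _)
  have hL : ∀ (c : H₁ →₀ ℂ) (h : ψ c ∈ S), L ⟨ψ c, h⟩ = φ c := by
    intro c h
    have h1 : ψ.quotKerEquivRange.symm ⟨ψ c, h⟩ = (LinearMap.ker ψ).mkQ c :=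
      ψ.quotKerEquivRange_symm_apply_image c h
    show L0 (ψ.quotKerEquivRange.symm ⟨ψ c, h⟩) = φ c
    rw [h1, Submodule.mkQ_apply, Submodule.liftQ_apply]
  have hLb : ∀ x : S, ‖L x‖ ≤ 1 * ‖x‖ := by
    rintro ⟨x, hx⟩
    obtain ⟨c, rfl⟩ := hx
    rw [hL c (LinearMap.mem_range_self ψ c), one_mul]
    exact hbound c
  let D0 : S →L[ℂ] 𝓕₂ := L.mkContinuous 1 hLb
  have hD0norm : ‖D0‖ ≤ 1 := L.mkContinuous_norm_le zero_le_one hLb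
  have hdense : DenseRange (S.subtypeL) := by
    have hr : Set.range (S.subtypeL) = (S : Set 𝓕₁) := Subtype.range_coe
    rw [DenseRange, hr]
    have htop : S.topologicalClosure = ⊤ := by
      rw [hS, Finsupp.range_linearCombination]
      exact hF₁.dense_span
    rw [dense_iff_closure_eq, ← Submodule.topologicalClosure_coe, htop]
    rfl
  have hui : ∀ x : S, ‖x‖ ≤ ((1 : ℝ≥0) : ℝ) * ‖S.subtypeL x‖ := by
    intro x
    rw [NNReal.coe_one, one_mul]
    exact le_of_eq rfl
  let D : 𝓕₁ →L[ℂ] 𝓕₂ :=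
    D0.extend S.subtypeL
  have hDnorm : ‖D‖ ≤ 1 := by
    have hle := D0.opNorm_extend_le (e := S.subtypeL) (h_dense := hdense) (h_e := hui)
    calc ‖D‖ ≤ ((1 : ℝ≥0) : ℝ) * ‖D0‖ := hle
      _ ≤ 1 := by simpa using hD0norm
  have hDk : ∀ y : H₁, D (k₁ y) = k₂ (A y) := by
    intro y
    have h1 : ψ (Finsupp.single y 1) = k₁ y := by
      rw [hψ, Finsupp.linearCombination_single, one_smul]
    have h2 : φ (Finsupp.single y 1) = k₂ (A y) := by
      rw [hφ, Finsupp.linearCombination_single, one_smul]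
    have hmem : k₁ y ∈ S := ⟨Finsupp.single y 1, h1⟩
    have h3 : D (S.subtypeL ⟨k₁ y, hmem⟩) = D0 ⟨k₁ y, hmem⟩ :=
      ContinuousLinearMap.extend_eq D0 hdense
        (ContinuousLinearMap.isUniformEmbedding_of_bound _ hui).isUniformInducing ⟨k₁ y, hmem⟩
    have h4 : S.subtypeL ⟨k₁ y, hmem⟩ = k₁ y := rfl
    have h5 : (⟨k₁ y, hmem⟩ : S) = ⟨ψ (Finsupp.single y 1), h1 ▸ hmem⟩ :=
      Subtype.ext h1.symm
    rw [h4] at h3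
    rw [h3]
    show L (⟨k₁ y, hmem⟩ : S) = k₂ (A y)
    rw [h5, hL (Finsupp.single y 1) _, h2]
  refine ⟨ContinuousLinearMap.adjoint D, ?_, ?_⟩
  · rw [show ‖ContinuousLinearMap.adjoint D‖ = ‖D‖ from
      ContinuousLinearMap.adjoint.norm_map D]
    exact hDnorm
  · intro f z
    rw [hF₁.reproducing, ContinuousLinearMap.adjoint_inner_right, hDk, ← hF₂.reproducing]

end FockCompositionAux

/-- For `A : H₁ → H₂` with `‖A‖ ≤ 1`, the composition operator
`C_A : F(H₂) → F(H₁), f ↦ f ∘ A` exists as a bounded operator with `‖C_A‖ ≤ 1`, its adjoint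
is `C_{A*}`, it is injective when `A` is surjective, and it is an isometric embedding when
`A A* = id`. -/
theorem statement_9 {H₁ H₂ 𝓕₁ 𝓕₂ : Type*}
    [NormedAddCommGroup H₁] [InnerProductSpace ℂ H₁] [CompleteSpace H₁]
    [TopologicalSpace.SeparableSpace H₁]
    [NormedAddCommGroup H₂] [InnerProductSpace ℂ H₂] [CompleteSpace H₂]
    [TopologicalSpace.SeparableSpace H₂]
    [NormedAddCommGroup 𝓕₁] [InnerProductSpace ℂ 𝓕₁] [CompleteSpace 𝓕₁]
    [NormedAddCommGroup 𝓕₂] [InnerProductSpace ℂ 𝓕₂] [CompleteSpace 𝓕₂]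
    (ev₁ : 𝓕₁ →ₗ[ℂ] (H₁ → ℂ)) (k₁ : H₁ → 𝓕₁) (hF₁ : IsFockSpace H₁ 𝓕₁ ev₁ k₁)
    (ev₂ : 𝓕₂ →ₗ[ℂ] (H₂ → ℂ)) (k₂ : H₂ → 𝓕₂) (hF₂ : IsFockSpace H₂ 𝓕₂ ev₂ k₂)
    (A : H₁ →L[ℂ] H₂) (hA : ‖A‖ ≤ 1) :
    (∃ C : 𝓕₂ →L[ℂ] 𝓕₁, ∀ (f : 𝓕₂) (z : H₁), ev₁ (C f) z = ev₂ f (A z)) ∧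
    ∀ C : 𝓕₂ →L[ℂ] 𝓕₁, (∀ (f : 𝓕₂) (z : H₁), ev₁ (C f) z = ev₂ f (A z)) →
      ‖C‖ ≤ 1 ∧
      (∀ C' : 𝓕₁ →L[ℂ] 𝓕₂,
        (∀ (g : 𝓕₁) (z : H₂), ev₂ (C' g) z = ev₁ g (ContinuousLinearMap.adjoint A z)) →
        ContinuousLinearMap.adjoint C = C') ∧
      (Function.Surjective A → Function.Injective C) ∧
      (A ∘L ContinuousLinearMap.adjoint A = 1 → Isometry C) := by
  classical
  obtain ⟨C₀, hC₀n, hC₀⟩ := exists_comp hF₁ hF₂ A hA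
  have uniq : ∀ C C' : 𝓕₂ →L[ℂ] 𝓕₁, (∀ (f : 𝓕₂) (z : H₁), ev₁ (C f) z = ev₂ f (A z)) →
      (∀ (f : 𝓕₂) (z : H₁), ev₁ (C' f) z = ev₂ f (A z)) → C = C' := by
    intro C C' h h'
    ext f
    apply hF₁.eval_injective
    funext z
    rw [h, h']
  refine ⟨⟨C₀, hC₀⟩, ?_⟩
  intro C hC
  have hadj : ∀ C' : 𝓕₁ →L[ℂ] 𝓕₂,
      (∀ (g : 𝓕₁) (z : H₂), ev₂ (C' g) z = ev₁ g (ContinuousLinearMap.adjoint A z)) →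
      ContinuousLinearMap.adjoint C = C' := by
    intro C' hC'
    have hCk : ∀ w : H₂, C (k₂ w) = k₁ (ContinuousLinearMap.adjoint A w) := by
      intro w
      apply hF₁.eval_injective
      funext s
      rw [hC (k₂ w) s, hF₂.kernel_apply, hF₁.kernel_apply,
        ContinuousLinearMap.adjoint_inner_left]
    ext g
    apply hF₂.eval_injective
    funext w
    rw [hC' g w, hF₂.reproducing, hF₁.reproducing,
      ContinuousLinearMap.adjoint_inner_right, hCk]
  refine ⟨by rw [uniq C C₀ hC hC₀]; exact hC₀n, hadj, ?_, ?_⟩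
  · intro hs
    rw [injective_iff_map_eq_zero]
    intro f hf
    apply hF₂.eval_injective
    funext w
    obtain ⟨zz, rfl⟩ := hs w
    have h1 := hC f zz
    rw [hf, map_zero] at h1
    rw [map_zero]
    exact h1.symm
  · intro hAA
    have hA' : ‖ContinuousLinearMap.adjoint A‖ ≤ 1 := by
      rw [show ‖ContinuousLinearMap.adjoint A‖ = ‖A‖ from
        ContinuousLinearMap.adjoint.norm_map A]
      exact hA
    obtain ⟨C', hC'n, hC'⟩ := exists_comp hF₂ hF₁ (ContinuousLinearMap.adjoint A) hA'
    have hadjC : ContinuousLinearMap.adjoint C = C' := hadj C' hC'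
    have hCC : ∀ f : 𝓕₂, C' (C f) = f := by
      intro f
      apply hF₂.eval_injective
      funext w
      have hw : A (ContinuousLinearMap.adjoint A w) = w := by
        have h0 := ContinuousLinearMap.ext_iff.mp hAA w
        simpa using h0
      rw [hC' (C f) w, hC f _, hw]
    refine AddMonoidHomClass.isometry_of_norm C fun f => ?_
    have h1 := ContinuousLinearMap.adjoint_inner_left C f (C f)
    rw [hadjC, hCC f] at h1
    have h2 : ‖C f‖ ^ 2 = ‖f‖ ^ 2 := by
      rw [← inner_self_eq_norm_sq (𝕜 := ℂ) (C f), ← inner_self_eq_norm_sq (𝕜 := ℂ) f, ← h1]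
    have h3 := congrArg Real.sqrt h2
    rwa [Real.sqrt_sq (norm_nonneg _), Real.sqrt_sq (norm_nonneg _)] at h3
end
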